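/- arXiv:1711.07795 — 2 statements merged into one kernel-verified Lean document; each statement's English description precedes it below -/
import Mathlib

section
/- Let Δ₀ be a BV Laplacian on the graded commutative algebra X with associated BV bracket (−,−)₀, and let a ∈ X be a degree-0 element satisfying Δ₀a + (1/2)(a,a)₀ = 0. Then the operator Δ_a = Δ₀ + (a,−)₀ is again a BV Laplacian on X (i.e. Δ_a raises degree by 1, satisfies the second-order differential operator identity, squares to zero, and annihilates 1). -/
/-!
Common setup: real unital ℤ-graded (graded-)commutative algebras, BV Laplacians,
BV brackets, BV algebra structures, canonical maps and master actions.
-/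

/-- Graded commutativity with Koszul signs: `f * g = (-1)^{|f||g|} g * f`
for homogeneous `f`, `g`. -/
def GradedComm {X : Type*} [Ring X] [Algebra ℝ X] (𝒜 : ℤ → Submodule ℝ X) : Prop :=
  ∀ (i j : ℤ) (f g : X), f ∈ 𝒜 i → g ∈ 𝒜 j → f * g = ((-1 : ℝ) ^ (i * j)) • (g * f)

/-- `D` is a BV Laplacian on the ℤ-graded algebra `X` with grading `𝒜`:
it raises degree by `1`, is a second-order differential operator
(seven-term identity on homogeneous elements), squares to zero and kills `1`. -/
def IsBVLaplacian {X : Type*} [Ring X] [Algebra ℝ X]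
    (𝒜 : ℤ → Submodule ℝ X) (D : X →ₗ[ℝ] X) : Prop :=
  (∀ (i : ℤ) (f : X), f ∈ 𝒜 i → D f ∈ 𝒜 (i + 1)) ∧
  (∀ (i j k : ℤ) (f g h : X), f ∈ 𝒜 i → g ∈ 𝒜 j → h ∈ 𝒜 k →
    D (f * g * h) =
      -(D f * g * h) - ((-1 : ℝ) ^ i) • (f * D g * h)
        - ((-1 : ℝ) ^ (i + j)) • (f * g * D h)
        + D (f * g) * h + ((-1 : ℝ) ^ ((i + 1) * j)) • (g * D (f * h))
        + ((-1 : ℝ) ^ i) • (f * D (g * h))) ∧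
  (∀ f : X, D (D f) = 0) ∧
  D 1 = 0

/-- `Br` is the BV bracket associated with the Laplacian `D`: it is the bilinear
map given on homogeneous `f`, `g` by
`(f,g) = (-1)^{|f|} (D(fg) - (Df)g - (-1)^{|f|} f(Dg))`. -/
def IsBVBracketOf {X : Type*} [Ring X] [Algebra ℝ X]
    (𝒜 : ℤ → Submodule ℝ X) (D : X →ₗ[ℝ] X) (Br : X →ₗ[ℝ] X →ₗ[ℝ] X) : Prop :=
  ∀ (i j : ℤ) (f g : X), f ∈ 𝒜 i → g ∈ 𝒜 j →
    Br f g = ((-1 : ℝ) ^ i) • (D (f * g) - D f * g - ((-1 : ℝ) ^ i) • (f * D g))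

/-- A BV algebra structure on the ℤ-graded algebra `X` with grading `𝒜`:
graded commutativity, a BV Laplacian `Δ` and its associated BV bracket. -/
structure BVAlgebraStr (X : Type*) [Ring X] [Algebra ℝ X]
    (𝒜 : ℤ → Submodule ℝ X) where
  grcomm : GradedComm 𝒜
  Δ : X →ₗ[ℝ] X
  isBVLaplacian : IsBVLaplacian 𝒜 Δ
  bracket : X →ₗ[ℝ] X →ₗ[ℝ] X
  isBracket : IsBVBracketOf 𝒜 Δ bracket

/-- The bracket `Br` is nonsingular: its center is exactly `ℝ·1`. -/
def IsNonsingularBracket {X : Type*} [Ring X] [Algebra ℝ X]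
    (Br : X →ₗ[ℝ] X →ₗ[ℝ] X) : Prop :=
  ∀ c : X, (∀ f : X, Br f c = 0) ↔ ∃ r : ℝ, c = algebraMap ℝ X r

/-- `α` is a canonical map with logarithmic Jacobian `r`: a degree-preserving
isomorphism of unital algebras with `Δ_Y(αf) - α(Δ_X f) + (r, αf)_Y = 0`,
where `r` has degree `0`. -/
def IsCanonicalWithJacobian {X Y : Type*} [Ring X] [Algebra ℝ X] [Ring Y] [Algebra ℝ Y]
    (𝒜 : ℤ → Submodule ℝ X) (ℬ : ℤ → Submodule ℝ Y)
    (ΔX : X →ₗ[ℝ] X) (ΔY : Y →ₗ[ℝ] Y) (BrY : Y →ₗ[ℝ] Y →ₗ[ℝ] Y)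
    (α : X ≃ₐ[ℝ] Y) (r : Y) : Prop :=
  (∀ (i : ℤ) (f : X), f ∈ 𝒜 i → α f ∈ ℬ i) ∧ r ∈ ℬ 0 ∧
  (∀ f : X, ΔY (α f) - α (ΔX f) + BrY r (α f) = 0)

/-- `ξ` is an infinitesimal canonical map with logarithmic Jacobian `e`:
a degree-`0` derivation with `Δ(ξf) - ξ(Δf) + (e, f) = 0`, `e` of degree `0`. -/
def IsInfCanonicalWithJacobian {X : Type*} [Ring X] [Algebra ℝ X]
    {𝒜 : ℤ → Submodule ℝ X} (B : BVAlgebraStr X 𝒜)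
    (ξ : X →ₗ[ℝ] X) (e : X) : Prop :=
  (∀ (i : ℤ) (f : X), f ∈ 𝒜 i → ξ f ∈ 𝒜 i) ∧
  (∀ f g : X, ξ (f * g) = ξ f * g + f * ξ g) ∧
  e ∈ 𝒜 0 ∧
  (∀ f : X, B.Δ (ξ f) - ξ (B.Δ f) + B.bracket e f = 0)

/-- `S` is a BV quantum master action: a degree-`0` element satisfying the
quantum master equation `ΔS + (1/2)(S,S) = 0`. -/
def IsMasterAction {X : Type*} [Ring X] [Algebra ℝ X]
    {𝒜 : ℤ → Submodule ℝ X} (B : BVAlgebraStr X 𝒜) (S : X) : Prop :=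
  S ∈ 𝒜 0 ∧ B.Δ S + (1 / 2 : ℝ) • B.bracket S S = 0


/-!
For `a` of degree `0` the bracket `(a,-) = Δ(a ·) - (Δa) · - a Δ` is an odd derivation (the
seven-term identity with first argument `a`), hence itself satisfies the seven-term identity,
which is linear in the operator; so `Δ + (a,-)` is of second order and raises degree by one.
For nilpotency, `Δ(a,-) + (a,Δ-) = -Δ((Δa) ·) - (Δa) Δ` holds for every degree-`0` element, while
the master equation `(a,a) = -2 Δa` forces `(a,Δa) = 0` and then
`(a,(a,-)) = Δ((Δa) ·) + (Δa) Δ`, so the cross terms cancel.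
-/

lemma neg_one_zpow_mul_self (n : ℤ) : (-1 : ℝ) ^ n * (-1) ^ n = 1 := by
  rw [← mul_zpow]; norm_num

/-- The second clause of `IsBVLaplacian`. -/
def IsSecondOrder {X : Type*} [Ring X] [Algebra ℝ X]
    (𝒜 : ℤ → Submodule ℝ X) (D : X →ₗ[ℝ] X) : Prop :=
  ∀ (i j k : ℤ) (f g h : X), f ∈ 𝒜 i → g ∈ 𝒜 j → h ∈ 𝒜 k →
    D (f * g * h) =
      -(D f * g * h) - ((-1 : ℝ) ^ i) • (f * D g * h)
        - ((-1 : ℝ) ^ (i + j)) • (f * g * D h)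
        + D (f * g) * h + ((-1 : ℝ) ^ ((i + 1) * j)) • (g * D (f * h))
        + ((-1 : ℝ) ^ i) • (f * D (g * h))

def IsOddDerivation {X : Type*} [Ring X] [Algebra ℝ X]
    (𝒜 : ℤ → Submodule ℝ X) (L : X →ₗ[ℝ] X) : Prop :=
  (∀ (i : ℤ) (f : X), f ∈ 𝒜 i → L f ∈ 𝒜 (i + 1)) ∧
  ∀ (i : ℤ) (f : X), f ∈ 𝒜 i → ∀ g : X, L (f * g) = L f * g + ((-1 : ℝ) ^ i) • (f * L g)

section Graded

variable {X : Type*} [Ring X] [Algebra ℝ X] {𝒜 : ℤ → Submodule ℝ X}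

lemma IsSecondOrder.add {D E : X →ₗ[ℝ] X} (hD : IsSecondOrder 𝒜 D) (hE : IsSecondOrder 𝒜 E) :
    IsSecondOrder 𝒜 (D + E) := by
  intro i j k f g h hf hg hh
  simp only [LinearMap.add_apply, hD i j k f g h hf hg hh, hE i j k f g h hf hg hh,
    mul_add, add_mul, smul_add]
  abel

lemma GradedComm.mul_self_eq_zero_of_odd (hgc : GradedComm 𝒜) {i : ℤ} (hi : Odd i) {b : X}
    (hb : b ∈ 𝒜 i) : b * b = 0 := by
  have h := hgc i i b b hb hb
  rw [(hi.mul hi).neg_one_zpow, neg_one_smul, eq_neg_iff_add_eq_zero, ← two_smul ℝ] at h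
  exact (smul_eq_zero.mp h).resolve_left two_ne_zero

lemma IsOddDerivation.isSecondOrder [SetLike.GradedMul 𝒜] (hgc : GradedComm 𝒜)
    {L : X →ₗ[ℝ] X} (hL : IsOddDerivation 𝒜 L) : IsSecondOrder 𝒜 L := by
  intro i j k f g h hf hg _
  have hsgn : (-1 : ℝ) ^ ((i + 1) * j) = (-1) ^ (i * j) * (-1) ^ j := by
    rw [add_mul, one_mul, zpow_add₀ (by norm_num)]
  have hg_Lf : (-1 : ℝ) ^ ((i + 1) * j) • (g * (L f * h)) = L f * (g * h) := by
    have h0 := congrArg (· * h) (hgc j (i + 1) g (L f) hg (hL.1 i f hf))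
    simp only [smul_mul_assoc, mul_assoc] at h0
    rw [h0, smul_smul, mul_comm j, neg_one_zpow_mul_self, one_smul]
  have hg_f : (-1 : ℝ) ^ (i * j) • (g * (f * L h)) = f * (g * L h) := by
    have h0 := congrArg (· * L h) (hgc j i g f hg hf)
    simp only [smul_mul_assoc, mul_assoc] at h0
    rw [h0, smul_smul, mul_comm j, neg_one_zpow_mul_self, one_smul]
  rw [hL.2 _ _ (SetLike.mul_mem_graded hf hg), hL.2 i f hf, hL.2 i f hf, hL.2 j g hg,
    zpow_add₀ (by norm_num : (-1 : ℝ) ≠ 0)]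
  rw [hsgn] at hg_Lf ⊢
  simp only [mul_add, add_mul, smul_add, mul_smul_comm, smul_mul_assoc, smul_smul, mul_assoc]
  linear_combination (norm := module) -hg_Lf - ((-1 : ℝ) ^ i * (-1 : ℝ) ^ j) • hg_f

lemma GradedComm.mul_comm_of_mem_zero [GradedAlgebra 𝒜] (hgc : GradedComm 𝒜) {a : X}
    (ha : a ∈ 𝒜 0) (f : X) : a * f = f * a := by
  induction f using DirectSum.Decomposition.inductionOn 𝒜 with
  | zero => simp
  | homogeneous m => simpa using hgc 0 _ a m ha m.2
  | add x y hx hy => simp [mul_add, add_mul, hx, hy]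

end Graded

namespace BVAlgebraStr

variable {X : Type*} [Ring X] [Algebra ℝ X] {𝒜 : ℤ → Submodule ℝ X} (B : BVAlgebraStr X 𝒜)
  {a : X}

lemma Δ_mem {i : ℤ} {f : X} (hf : f ∈ 𝒜 i) : B.Δ f ∈ 𝒜 (i + 1) :=
  B.isBVLaplacian.1 i f hf

lemma isSecondOrder_Δ : IsSecondOrder 𝒜 B.Δ := B.isBVLaplacian.2.1

@[simp] lemma Δ_Δ (f : X) : B.Δ (B.Δ f) = 0 := B.isBVLaplacian.2.2.1 f

lemma Δ_mul_Δ_self (ha : a ∈ 𝒜 0) : B.Δ a * B.Δ a = 0 :=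
  B.grcomm.mul_self_eq_zero_of_odd odd_one (by simpa using B.Δ_mem ha)

lemma bracket_self_of_master (hma : B.Δ a + (1 / 2 : ℝ) • B.bracket a a = 0) :
    B.bracket a a = (-2 : ℝ) • B.Δ a := by
  linear_combination (norm := module) (2 : ℝ) • hma

variable [GradedAlgebra 𝒜]

lemma bracket_eq_of_mem_zero (ha : a ∈ 𝒜 0) (f : X) :
    B.bracket a f = B.Δ (a * f) - B.Δ a * f - a * B.Δ f := by
  induction f using DirectSum.Decomposition.inductionOn 𝒜 with
  | zero => simp
  | homogeneous m => simpa using B.isBracket 0 _ a m ha m.2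
  | add x y hx hy =>
      simp only [map_add, mul_add, hx, hy]
      abel

lemma Δ_mul_eq_of_mem_zero (ha : a ∈ 𝒜 0) (f : X) :
    B.Δ (a * f) = B.bracket a f + B.Δ a * f + a * B.Δ f := by
  rw [B.bracket_eq_of_mem_zero ha]; abel

lemma isOddDerivation_bracket (ha : a ∈ 𝒜 0) : IsOddDerivation 𝒜 (B.bracket a) := by
  have hDa : B.Δ a ∈ 𝒜 1 := by simpa using B.Δ_mem ha
  refine ⟨fun i f hf => ?_, fun i f hf g => ?_⟩
  · rw [B.bracket_eq_of_mem_zero ha]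
    refine sub_mem (sub_mem (B.Δ_mem ?_) ?_) ?_
    · simpa using SetLike.mul_mem_graded ha hf
    · simpa [add_comm] using SetLike.mul_mem_graded hDa hf
    · simpa using SetLike.mul_mem_graded ha (B.Δ_mem hf)
  induction g using DirectSum.Decomposition.inductionOn 𝒜 with
  | zero => simp
  | add x y hx hy =>
      simp only [mul_add, map_add, hx, hy, smul_add]
      abel
  | @homogeneous j m =>
      obtain ⟨g, hg⟩ := m
      have hf_Da : (-1 : ℝ) ^ i • (f * (B.Δ a * g)) = B.Δ a * (f * g) := by
        have h0 := congrArg (· * g) (B.grcomm i 1 f (B.Δ a) hf hDa)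
        simp only [mul_one, smul_mul_assoc, mul_assoc] at h0
        rw [h0, smul_smul, neg_one_zpow_mul_self, one_smul]
      have hf_a : f * (a * B.Δ g) = a * (f * B.Δ g) := by
        rw [← mul_assoc, ← B.grcomm.mul_comm_of_mem_zero ha, mul_assoc]
      have h7 := B.isSecondOrder_Δ 0 i j a f g ha hf hg
      simp only [zero_add, one_mul, zpow_zero, one_smul, mul_assoc] at h7
      simp only [B.bracket_eq_of_mem_zero ha, sub_mul, mul_sub, mul_assoc]
      linear_combination (norm := module) h7 + hf_Da + ((-1 : ℝ) ^ i) • hf_a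

lemma Δ_bracket_add_bracket_Δ (ha : a ∈ 𝒜 0) (f : X) :
    B.Δ (B.bracket a f) + B.bracket a (B.Δ f) = -B.Δ (B.Δ a * f) - B.Δ a * B.Δ f := by
  simp only [B.bracket_eq_of_mem_zero ha, map_sub, Δ_Δ, mul_zero, sub_zero]
  abel

lemma Δ_mul_Δ_of_master (ha : a ∈ 𝒜 0) (hma : B.Δ a + (1 / 2 : ℝ) • B.bracket a a = 0) :
    B.Δ (a * B.Δ a) = 0 := by
  have h := congrArg B.Δ (B.bracket_self_of_master hma)
  rw [B.bracket_eq_of_mem_zero ha, ← B.grcomm.mul_comm_of_mem_zero ha (B.Δ a)] at h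
  simp only [map_sub, map_smul, Δ_Δ, smul_zero] at h
  have h2 : (2 : ℝ) • B.Δ (a * B.Δ a) = 0 := by linear_combination (norm := module) -h
  exact (smul_eq_zero.mp h2).resolve_left two_ne_zero

lemma bracket_Δ_of_master (ha : a ∈ 𝒜 0) (hma : B.Δ a + (1 / 2 : ℝ) • B.bracket a a = 0) :
    B.bracket a (B.Δ a) = 0 := by
  have h := B.Δ_bracket_add_bracket_Δ ha a
  rw [B.bracket_self_of_master hma, ← B.grcomm.mul_comm_of_mem_zero ha (B.Δ a),
    B.Δ_mul_Δ_of_master ha hma, B.Δ_mul_Δ_self ha, map_smul, Δ_Δ, smul_zero] at h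
  simpa using h

lemma bracket_bracket_of_master (ha : a ∈ 𝒜 0)
    (hma : B.Δ a + (1 / 2 : ℝ) • B.bracket a a = 0) (f : X) :
    B.bracket a (B.bracket a f) = B.Δ (B.Δ a * f) + B.Δ a * B.Δ f := by
  have hL := B.isOddDerivation_bracket ha
  have hL_a : ∀ g, B.bracket a (a * g) = (-2 : ℝ) • (B.Δ a * g) + a * B.bracket a g :=
    fun g => by simpa [B.bracket_self_of_master hma] using hL.2 0 a ha g
  have hL_Δa : ∀ g, B.bracket a (B.Δ a * g) = -(B.Δ a * B.bracket a g) := fun g => by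
    simpa [B.bracket_Δ_of_master ha hma] using hL.2 1 (B.Δ a) (by simpa using B.Δ_mem ha) g
  have hL_Δ : ∀ g, B.bracket a (B.Δ g) =
      -B.Δ (B.bracket a g) - B.Δ (B.Δ a * g) - B.Δ a * B.Δ g :=
    fun g => by linear_combination (norm := module) B.Δ_bracket_add_bracket_Δ ha g
  have hΔa_a : ∀ g, B.Δ a * (a * g) = a * (B.Δ a * g) := fun g => by
    rw [← mul_assoc, ← B.grcomm.mul_comm_of_mem_zero ha, mul_assoc]
  -- Expanding `(a,(a,f))` by these rules gives `2 (Δ((Δa) f) + (Δa) Δf) - (a,(a,f))`, the last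
  -- term entering through `Δ(a (a,f))`; hence the factor `1/2` below.
  have hLL := congrArg (B.bracket a) (B.bracket_eq_of_mem_zero ha f)
  have hL_Δaf := hL_Δ (a * f)
  have hΔ_Laf := congrArg B.Δ (hL_a f)
  have hΔ_aLf := B.Δ_mul_eq_of_mem_zero ha (B.bracket a f)
  have hΔ_Δaaf := congrArg B.Δ (hΔa_a f)
  have hΔ_aΔaf := B.Δ_mul_eq_of_mem_zero ha (B.Δ a * f)
  have hΔa_Δaf := congrArg (B.Δ a * ·) (B.Δ_mul_eq_of_mem_zero ha f)
  have hL_aΔf := hL_a (B.Δ f)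
  have ha_LΔf := congrArg (a * ·) (hL_Δ f)
  rw [map_sub, map_sub] at hLL
  simp only [map_add, map_smul, mul_add, mul_sub, mul_neg, hΔa_a, ← mul_assoc,
    B.Δ_mul_Δ_self ha, zero_mul] at hΔ_Laf hΔ_aΔaf hΔa_Δaf ha_LΔf
  simp only [mul_assoc] at hΔ_aΔaf hΔa_Δaf ha_LΔf
  linear_combination (norm := module) (1 / 2 : ℝ) • (hLL + hL_Δaf - hΔ_Laf - hΔ_aLf - hΔ_Δaaf
    - hΔ_aΔaf - (2 : ℝ) • hL_Δa f - hΔa_Δaf - hL_aΔf - ha_LΔf)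

end BVAlgebraStr

/-- twisting a BV Laplacian by `(a,-)₀` with `a` a degree-0
solution of the master equation yields again a BV Laplacian. -/
theorem stmt10 {X : Type*} [Ring X] [Algebra ℝ X]
    (𝒜 : ℤ → Submodule ℝ X) [GradedAlgebra 𝒜] (B : BVAlgebraStr X 𝒜)
    (a : X) (ha : a ∈ 𝒜 0)
    (hma : B.Δ a + (1 / 2 : ℝ) • B.bracket a a = 0) :
    IsBVLaplacian 𝒜 (B.Δ + B.bracket a) := by
  have hL := B.isOddDerivation_bracket ha
  refine ⟨fun i f hf => add_mem (B.Δ_mem hf) (hL.1 i f hf),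
    B.isSecondOrder_Δ.add (hL.isSecondOrder B.grcomm),
    fun f => ?_, ?_⟩
  · simp only [LinearMap.add_apply, map_add, BVAlgebraStr.Δ_Δ,
      B.bracket_bracket_of_master ha hma]
    linear_combination (norm := module) B.Δ_bracket_add_bracket_Δ ha f
  · simp [B.isBVLaplacian.2.2.2, B.bracket_eq_of_mem_zero ha]
end

section
/- Let Δ₀ be a nonsingular BV Laplacian on the graded commutative algebra X with BV bracket (−,−)₀, let a ∈ X be a degree-0 element with Δ₀a + (1/2)(a,a)₀ = 0, let α : X → X be an invertible degree-preserving morphism of unital graded algebras, and set Δ_{αa} = α∘(Δ₀ + (a,−)₀)∘α⁻¹. Then Δ_{αa} is nonsingular: the center of its associated BV bracket equals ℝ·1. -/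
/-!
Adding `(a, -)₀` to `Δ₀` does not change the bracket: since `a` has degree `0`, `(a, -)₀` is a
derivation of the product (with Koszul sign `(-1)^{|f|}`), and the bracket only measures the
failure of a Laplacian to be such a derivation. Conjugating by the graded isomorphism `α` then
conjugates the bracket, and `α` maps `ℝ·1` onto `ℝ·1`, so the centers correspond.
-/

lemma GradedRingHom.mem_of_map_mem {ι A B σ τ : Type*} [DecidableEq ι] [AddMonoid ι]
    [Semiring A] [Semiring B] [SetLike σ A] [SetLike τ B]
    [AddSubmonoidClass σ A] [AddSubmonoidClass τ B]
    {𝒜 : ι → σ} {ℬ : ι → τ} [GradedRing 𝒜] [GradedRing ℬ]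
    (f : 𝒜 →+*ᵍ ℬ) (hf : Function.Injective f) {x : A} {i : ι} (h : f x ∈ ℬ i) :
    x ∈ 𝒜 i := by
  have hx : (DirectSum.decompose 𝒜 x i : A) = x :=
    hf (by rw [GradedRingHom.map_directSumDecompose, DirectSum.decompose_of_mem_same ℬ h])
  exact hx ▸ SetLike.coe_mem _

lemma neg_one_zpow_mul_self_s13 {K : Type*} [Field K] (i : ℤ) : (-1 : K) ^ i * (-1) ^ i = 1 := by
  rw [← mul_zpow, neg_one_mul, neg_neg, one_zpow]

section Bracket

variable {X : Type*} [Ring X] [Algebra ℝ X] {𝒜 : ℤ → Submodule ℝ X}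

lemma BVAlgebraStr.bracket_mul_of_mem_zero [SetLike.GradedMonoid 𝒜] (B : BVAlgebraStr X 𝒜)
    {a F G : X} {m n : ℤ} (ha : a ∈ 𝒜 0) (hF : F ∈ 𝒜 m) (hG : G ∈ 𝒜 n) :
    B.bracket a (F * G) = B.bracket a F * G + ((-1 : ℝ) ^ m) • (F * B.bracket a G) := by
  have hΔa : B.Δ a ∈ 𝒜 1 := by simpa using B.isBVLaplacian.1 0 a ha
  have h7 := B.isBVLaplacian.2.1 0 m n a F G ha hF hG
  have hbaF := B.isBracket 0 m a F ha hF
  have hbaG := B.isBracket 0 n a G ha hG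
  have hbaFG := B.isBracket 0 (m + n) a (F * G) ha (SetLike.mul_mem_graded hF hG)
  simp only [zpow_zero, one_smul, zero_add, one_mul] at h7 hbaF hbaG hbaFG
  have hFa : ∀ z : X, F * (a * z) = a * (F * z) := fun z => by
    rw [← mul_assoc, show F * a = a * F by simpa using B.grcomm m 0 F a hF ha, mul_assoc]
  have hFΔa : F * (B.Δ a * G) = ((-1 : ℝ) ^ m) • (B.Δ a * (F * G)) := by
    rw [← mul_assoc, show F * B.Δ a = ((-1 : ℝ) ^ m) • (B.Δ a * F) by
      simpa using B.grcomm m 1 F (B.Δ a) hF hΔa, smul_mul_assoc, mul_assoc]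
  rw [hbaFG, hbaF, hbaG, ← mul_assoc a F G, h7]
  simp only [sub_mul, mul_sub, smul_sub, smul_smul, neg_one_zpow_mul_self_s13, one_smul,
    mul_assoc, hFΔa, hFa]
  abel

lemma IsBVBracketOf.add_derivation {D δ : X →ₗ[ℝ] X} {Br : X →ₗ[ℝ] X →ₗ[ℝ] X}
    (h : IsBVBracketOf 𝒜 D Br)
    (hδ : ∀ (i j : ℤ) (f g : X), f ∈ 𝒜 i → g ∈ 𝒜 j →
      δ (f * g) = δ f * g + ((-1 : ℝ) ^ i) • (f * δ g)) :
    IsBVBracketOf 𝒜 (D + δ) Br := by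
  intro i j f g hf hg
  rw [h i j f g hf hg, LinearMap.add_apply, LinearMap.add_apply, LinearMap.add_apply,
    hδ i j f g hf hg]
  simp only [add_mul, mul_add, smul_add, smul_sub]
  abel

lemma IsBVBracketOf.unique [DirectSum.Decomposition 𝒜] {D : X →ₗ[ℝ] X}
    {Br₁ Br₂ : X →ₗ[ℝ] X →ₗ[ℝ] X} (h₁ : IsBVBracketOf 𝒜 D Br₁) (h₂ : IsBVBracketOf 𝒜 D Br₂) :
    Br₁ = Br₂ := by
  ext f g
  induction f using DirectSum.Decomposition.inductionOn 𝒜 with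
  | zero => simp
  | add f₁ f₂ ih₁ ih₂ => simp only [map_add, LinearMap.add_apply, ih₁, ih₂]
  | homogeneous f =>
    induction g using DirectSum.Decomposition.inductionOn 𝒜 with
    | zero => simp
    | add g₁ g₂ ih₁ ih₂ => simp only [map_add, ih₁, ih₂]
    | homogeneous g => rw [h₁ _ _ _ _ f.2 g.2, h₂ _ _ _ _ f.2 g.2]

variable {Y : Type*} [Ring Y] [Algebra ℝ Y]

lemma IsBVBracketOf.conj_algEquiv {ℬ : ℤ → Submodule ℝ Y} {D : X →ₗ[ℝ] X}
    {Br : X →ₗ[ℝ] X →ₗ[ℝ] X} (h : IsBVBracketOf 𝒜 D Br) (α : X ≃ₐ[ℝ] Y)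
    (hα : ∀ (i : ℤ) (y : Y), y ∈ ℬ i → α.symm y ∈ 𝒜 i) :
    IsBVBracketOf ℬ (α.toLinearMap ∘ₗ D ∘ₗ α.symm.toLinearMap)
      ((Br.compl₁₂ α.symm.toLinearMap α.symm.toLinearMap).compr₂ α.toLinearMap) := by
  intro i j f g hf hg
  simp only [LinearMap.compr₂_apply, LinearMap.compl₁₂_apply, LinearMap.comp_apply,
    AlgEquiv.toLinearMap_apply, map_mul, h i j _ _ (hα i f hf) (hα j g hg)]
  simp only [map_smul, map_sub, map_mul, AlgEquiv.apply_symm_apply]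

lemma IsNonsingularBracket.conj_algEquiv {Br : X →ₗ[ℝ] X →ₗ[ℝ] X}
    (h : IsNonsingularBracket Br) (α : X ≃ₐ[ℝ] Y) :
    IsNonsingularBracket ((Br.compl₁₂ α.symm.toLinearMap α.symm.toLinearMap).compr₂
      α.toLinearMap) := by
  intro c
  have hc := h (α.symm c)
  rw [α.symm.surjective.forall] at hc
  simpa [map_eq_zero_iff _ α.injective, α.symm_apply_eq] using hc

end Bracket

theorem stmt13_general {X : Type*} [Ring X] [Algebra ℝ X]
    (𝒜 : ℤ → Submodule ℝ X) [GradedAlgebra 𝒜] (B : BVAlgebraStr X 𝒜)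
    (hX : IsNonsingularBracket B.bracket)
    (a : X) (ha : a ∈ 𝒜 0)
    (α : X ≃ₐ[ℝ] X) (hdeg : ∀ (i : ℤ) (f : X), f ∈ 𝒜 i → α f ∈ 𝒜 i) :
    ∀ Br : X →ₗ[ℝ] X →ₗ[ℝ] X,
      IsBVBracketOf 𝒜
        (α.toLinearMap.comp ((B.Δ + B.bracket a).comp α.symm.toLinearMap)) Br →
      IsNonsingularBracket Br := by
  intro Br hBr
  let αgr : 𝒜 →+*ᵍ 𝒜 := ⟨α.toRingHom, hdeg _ _⟩
  have hsymm : ∀ (i : ℤ) (y : X), y ∈ 𝒜 i → α.symm y ∈ 𝒜 i := fun i y hy =>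
    αgr.mem_of_map_mem α.injective (by simpa [αgr] using hy)
  have htwist : IsBVBracketOf 𝒜 (B.Δ + B.bracket a) B.bracket :=
    B.isBracket.add_derivation fun _ _ _ _ hf hg => B.bracket_mul_of_mem_zero ha hf hg
  rw [hBr.unique (htwist.conj_algEquiv α hsymm)]
  exact hX.conj_algEquiv α

/-- the conjugated twisted Laplacian `Δ_{αa}` is nonsingular. -/
theorem stmt13 {X : Type*} [Ring X] [Algebra ℝ X]
    (𝒜 : ℤ → Submodule ℝ X) [GradedAlgebra 𝒜] (B : BVAlgebraStr X 𝒜)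
    (hX : IsNonsingularBracket B.bracket)
    (a : X) (ha : a ∈ 𝒜 0)
    (hma : B.Δ a + (1 / 2 : ℝ) • B.bracket a a = 0)
    (α : X ≃ₐ[ℝ] X) (hdeg : ∀ (i : ℤ) (f : X), f ∈ 𝒜 i → α f ∈ 𝒜 i) :
    ∀ Br : X →ₗ[ℝ] X →ₗ[ℝ] X,
      IsBVBracketOf 𝒜
        (α.toLinearMap.comp ((B.Δ + B.bracket a).comp α.symm.toLinearMap)) Br →
      IsNonsingularBracket Br :=
  stmt13_general 𝒜 B hX a ha α hdeg
end
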